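/- Let V be a finite-dimensional real vector space, C ⊆ V a closed convex cone, and T : V → V a linear map with T(C) ⊆ C. Suppose C spans V and contains no line. Then the spectral radius ρ of T is an eigenvalue of T admitting an eigenvector in C. -/

import Mathlib

/-!
Because the cone is salient, some functional `f` satisfies `c ‖x‖ ≤ f x` on it; because it spans,
it contains a ball around some `u`. Together these give `‖T ^ n‖ ≤ const * f (T ^ n u)`.
Let `r = inf ‖T ^ (n+1)‖ ^ (1/(n+1))`, an upper bound for the spectral radius. For `l > r` the
series `S_l = ∑ l ^ -(n+1) • T ^ n u` converges in the cone and solves `(l - T) S_l = u`. Since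
`‖T ^ n‖ ≥ r ^ n`, also `f S_l ≥ const / (l - r)`, so `S_l` blows up as `l ↓ r`. The normalised
vectors `S_l / ‖S_l‖` are then approximate eigenvectors for `r` in the compact set cone ∩ sphere.
Any limit point is an eigenvector in the cone with eigenvalue `r`, so `r` is in the spectrum and is
the spectral radius.
-/

open Set Filter Topology

namespace ProperCone

variable {E : Type*} [NormedAddCommGroup E] [NormedSpace ℝ E]

lemma exists_coe_eq {C : Set E} (hne : C.Nonempty) (hclosed : IsClosed C) (hconv : Convex ℝ C)
    (hcone : ∀ r : ℝ, 0 ≤ r → ∀ x ∈ C, r • x ∈ C) : ∃ K : ProperCone ℝ E, (K : Set E) = C := by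
  have hzero : (0 : E) ∈ C := by
    obtain ⟨x, hx⟩ := hne
    simpa using hcone 0 le_rfl x hx
  have hadd {x y : E} (hx : x ∈ C) (hy : y ∈ C) : x + y ∈ C := by
    have hmid := hconv hx hy one_half_pos.le one_half_pos.le (add_halves 1)
    simpa [smul_add, smul_smul] using hcone 2 zero_le_two _ hmid
  exact ⟨{ carrier := C
           add_mem' := hadd
           zero_mem' := hzero
           smul_mem' := fun c x hx => hcone c c.2 x hx
           isClosed' := hclosed }, rfl⟩

lemma mem_of_hasSum (K : ProperCone ℝ E) {f : ℕ → E} {S : E} (hS : HasSum f S)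
    (hf : ∀ n, f n ∈ K) : S ∈ K :=
  K.isClosed.mem_of_tendsto hS.tendsto_sum_nat
    (Eventually.of_forall fun _ => sum_mem fun n _ => hf n)

lemma exists_nonneg_pos_of_ne_zero {K : ProperCone ℝ E} (hK : (K : ConvexCone ℝ E).Salient)
    {x : E} (hx : x ∈ K) (hx0 : x ≠ 0) :
    ∃ f : StrongDual ℝ E, (∀ y ∈ K, 0 ≤ f y) ∧ 0 < f x := by
  obtain ⟨f, hfK, hfx⟩ := K.hyperplane_separation_point (x₀ := -x) (hK x hx hx0)
  exact ⟨f, hfK, by simpa using hfx⟩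

lemma exists_nonneg_pos_on_isCompact {K : ProperCone ℝ E} (hK : (K : ConvexCone ℝ E).Salient)
    {S : Set E} (hS : IsCompact S) (hSK : S ⊆ K) (hS0 : (0 : E) ∉ S) :
    ∃ f : StrongDual ℝ E, (∀ y ∈ K, 0 ≤ f y) ∧ ∀ x ∈ S, 0 < f x := by
  suffices ∃ f : StrongDual ℝ E, (∀ y ∈ K, 0 ≤ f y) ∧ ∀ x ∈ S ∩ K, 0 < f x by
    simpa [inter_eq_left.2 hSK] using this
  refine hS.induction_on
    (p := fun s => ∃ f : StrongDual ℝ E, (∀ y ∈ K, 0 ≤ f y) ∧ ∀ x ∈ s ∩ K, 0 < f x)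
    ⟨0, by simp⟩ ?_ ?_ ?_
  · rintro s t hst ⟨f, hfK, hft⟩
    exact ⟨f, hfK, fun x hx => hft x ⟨hst hx.1, hx.2⟩⟩
  · rintro s t ⟨f, hfK, hfs⟩ ⟨g, hgK, hgt⟩
    refine ⟨f + g, fun y hy => add_nonneg (hfK y hy) (hgK y hy), ?_⟩
    rintro x ⟨hx | hx, hxK⟩
    · exact add_pos_of_pos_of_nonneg (hfs x ⟨hx, hxK⟩) (hgK x hxK)
    · exact add_pos_of_nonneg_of_pos (hfK x hxK) (hgt x ⟨hx, hxK⟩)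
  · intro x hx
    obtain ⟨f, hfK, hfx⟩ :=
      exists_nonneg_pos_of_ne_zero hK (hSK hx) (ne_of_mem_of_not_mem hx hS0)
    have hpos : {y | 0 < f y} ∈ 𝓝 x := (isOpen_lt continuous_const f.continuous).mem_nhds hfx
    exact ⟨_, mem_nhdsWithin_of_mem_nhds hpos, f, hfK, fun _ hy => hy.1⟩

lemma exists_mul_norm_le [FiniteDimensional ℝ E] {K : ProperCone ℝ E}
    (hK : (K : ConvexCone ℝ E).Salient) :
    ∃ f : StrongDual ℝ E, ∃ c > 0, ∀ x ∈ K, c * ‖x‖ ≤ f x := by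
  have hS : IsCompact ((K : Set E) ∩ Metric.sphere 0 1) :=
    (isCompact_sphere 0 1).inter_left K.isClosed
  obtain ⟨f, -, hf⟩ := exists_nonneg_pos_on_isCompact hK hS inter_subset_left (by simp)
  obtain ⟨c, hc, hcf⟩ := hS.exists_forall_le' f.continuous.continuousOn hf
  refine ⟨f, c, hc, fun x hx => ?_⟩
  rcases eq_or_ne x 0 with rfl | hx0
  · simp
  have hxn : 0 < ‖x‖ := norm_pos_iff.2 hx0
  have h := hcf (‖x‖⁻¹ • x) ⟨K.smul_mem hx (by positivity), by simp [norm_smul, hxn.ne']⟩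
  rw [map_smul, smul_eq_mul, le_inv_mul_iff₀ hxn] at h
  linarith

lemma exists_closedBall_subset [FiniteDimensional ℝ E] {K : ProperCone ℝ E}
    (hK : Submodule.span ℝ (K : Set E) = ⊤) :
    ∃ u, ∃ ε > 0, Metric.closedBall u ε ⊆ (K : Set E) := by
  have hvec : vectorSpan ℝ (K : Set E) = ⊤ := by
    refine eq_top_iff.2 (hK.symm.le.trans (Submodule.span_mono fun x hx => ?_))
    exact ⟨x, hx, 0, K.zero_mem, sub_zero x⟩
  obtain ⟨u, hu⟩ := K.convex.interior_nonempty_iff_affineSpan_eq_top.2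
    ((AffineSubspace.affineSpan_eq_top_iff_vectorSpan_eq_top_of_nonempty ℝ E E K.nonempty).2 hvec)
  obtain ⟨ε, hε, hball⟩ :=
    Metric.nhds_basis_closedBall.mem_iff.1 (mem_interior_iff_mem_nhds.1 hu)
  exact ⟨u, ε, hε, hball⟩

end ProperCone

lemma mul_mul_opNorm_le_of_closedBall {E F : Type*} [NormedAddCommGroup E] [NormedSpace ℝ E]
    [NormedAddCommGroup F] [NormedSpace ℝ F] {A : E →L[ℝ] F} {f : StrongDual ℝ F}
    {u : E} {c ε : ℝ} (hc : 0 < c) (hε : 0 < ε)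
    (h : ∀ y ∈ Metric.closedBall u ε, c * ‖A y‖ ≤ f (A y)) : c * ε * ‖A‖ ≤ f (A u) := by
  have hbound (y : E) (hy : ‖y‖ = 1) : c * ε * ‖A y‖ ≤ f (A u) := by
    have hplus := h (u + ε • y) (by simp [norm_smul, hy, abs_of_pos hε])
    have hminus := h (u - ε • y) (by simp [norm_smul, hy, abs_of_pos hε])
    have hdiff : A (u + ε • y) - A (u - ε • y) = (2 * ε) • A y := by
      simp only [map_add, map_sub, map_smul]
      module
    calc c * ε * ‖A y‖ = c * ‖A (u + ε • y) - A (u - ε • y)‖ / 2 := by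
          rw [hdiff, norm_smul, Real.norm_of_nonneg (by positivity)]; ring
      _ ≤ c * (‖A (u + ε • y)‖ + ‖A (u - ε • y)‖) / 2 := by gcongr; exact norm_sub_le _ _
      _ ≤ (f (A (u + ε • y)) + f (A (u - ε • y))) / 2 := by linarith
      _ = f (A u) := by simp only [map_add, map_sub]; ring
  have hfu : 0 ≤ f (A u) := (h u (Metric.mem_closedBall_self hε.le)).trans' (by positivity)
  rw [← le_div_iff₀' (by positivity)]
  exact A.opNorm_le_of_unit_norm (by positivity) fun y hy => by
    rw [le_div_iff₀' (by positivity)]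
    exact hbound y hy

lemma ContinuousLinearMap.mapsTo_pow {R M : Type*} [Semiring R] [TopologicalSpace M]
    [AddCommMonoid M] [Module R M] {T : M →L[R] M} {s : Set M} (h : MapsTo T s s) (n : ℕ) :
    MapsTo (T ^ n) s s := by
  rw [FunLike.coe_pow_eq_iterate]
  exact h.iterate n

lemma ContinuousLinearMap.mem_spectrum_of_apply_eq_smul {𝕜 F : Type*}
    [NontriviallyNormedField 𝕜] [NormedAddCommGroup F] [NormedSpace 𝕜 F] [CompleteSpace F]
    {T : F →L[𝕜] F} {w : F} {μ : 𝕜} (hw : w ≠ 0) (hTw : T w = μ • w) : μ ∈ spectrum 𝕜 T := by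
  rw [ContinuousLinearMap.spectrum_eq]
  exact Module.End.HasEigenvalue.mem_spectrum
    (Module.End.hasEigenvalue_of_hasEigenvector ⟨Module.End.mem_eigenspace_iff.2 hTw, hw⟩)

lemma tendsto_norm_atTop_of_tendsto_apply {ι E : Type*} [NormedAddCommGroup E]
    [NormedSpace ℝ E] {l : Filter ι} [l.NeBot] (f : StrongDual ℝ E) {S : ι → E}
    (h : Tendsto (fun i => f (S i)) l atTop) : Tendsto (fun i => ‖S i‖) l atTop := by
  have hf0 : 0 < ‖f‖ :=
    norm_pos_iff.2 fun hf => not_tendsto_const_atTop (0 : ℝ) l (by simpa [hf] using h)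
  exact Tendsto.atTop_of_const_mul₀ hf0
    (tendsto_atTop_mono (fun i => (Real.le_norm_self _).trans (f.le_opNorm _)) h)

section GrowthRate

variable {A : Type*} [NormedRing A]

/-- By Gelfand's formula this is the spectral radius over `ℂ`. Over `ℝ` the spectrum only sees
real eigenvalues, so a priori only `spectralRadius ℝ a ≤ normGrowthRate a` holds. -/
noncomputable def normGrowthRate (a : A) : ℝ :=
  ⨅ n : ℕ, ‖a ^ (n + 1)‖ ^ ((n + 1 : ℝ)⁻¹)

lemma normGrowthRate_nonneg (a : A) : 0 ≤ normGrowthRate a :=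
  le_ciInf fun _ => by positivity

lemma normGrowthRate_le (a : A) (n : ℕ) :
    normGrowthRate a ≤ ‖a ^ (n + 1)‖ ^ ((n + 1 : ℝ)⁻¹) :=
  ciInf_le ⟨0, by rintro _ ⟨m, rfl⟩; positivity⟩ n

lemma normGrowthRate_pow_le [NormOneClass A] (a : A) (n : ℕ) :
    normGrowthRate a ^ n ≤ ‖a ^ n‖ := by
  cases n with
  | zero => simp
  | succ n =>
    calc normGrowthRate a ^ (n + 1) ≤ (‖a ^ (n + 1)‖ ^ ((n + 1 : ℝ)⁻¹)) ^ (n + 1) :=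
          pow_le_pow_left₀ (normGrowthRate_nonneg a) (normGrowthRate_le a n) _
      _ = ‖a ^ (n + 1)‖ := by
          rw [← Nat.cast_add_one, Real.rpow_inv_natCast_pow (norm_nonneg _) n.succ_ne_zero]

lemma norm_pow_add_mul_le (a : A) (s k q : ℕ) :
    ‖a ^ (s + k * q)‖ ≤ ‖a ^ s‖ * ‖a ^ k‖ ^ q := by
  induction q with
  | zero => simp
  | succ q ih =>
    calc ‖a ^ (s + k * (q + 1))‖ = ‖a ^ (s + k * q) * a ^ k‖ := by rw [← pow_add]; ring_nf
      _ ≤ ‖a ^ (s + k * q)‖ * ‖a ^ k‖ := norm_mul_le _ _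
      _ ≤ ‖a ^ s‖ * ‖a ^ k‖ ^ q * ‖a ^ k‖ := by gcongr
      _ = ‖a ^ s‖ * ‖a ^ k‖ ^ (q + 1) := by ring

lemma exists_norm_pow_le_of_normGrowthRate_lt {a : A} {μ : ℝ} (hμ : normGrowthRate a < μ) :
    ∃ B, ∀ n, ‖a ^ n‖ ≤ B * μ ^ n := by
  have hμ0 : 0 < μ := (normGrowthRate_nonneg a).trans_lt hμ
  obtain ⟨m, hm⟩ := exists_lt_of_ciInf_lt hμ
  have hk : ‖a ^ (m + 1)‖ ≤ μ ^ (m + 1) := by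
    have h := pow_le_pow_left₀ (by positivity) hm.le (m + 1)
    rwa [← Nat.cast_add_one, Real.rpow_inv_natCast_pow (norm_nonneg _) m.succ_ne_zero] at h
  refine ⟨∑ s ∈ Finset.range (m + 1), ‖a ^ s‖ / μ ^ s, fun n => ?_⟩
  obtain ⟨s, q, hs, rfl⟩ : ∃ s q, s < m + 1 ∧ n = s + (m + 1) * q :=
    ⟨n % (m + 1), n / (m + 1), Nat.mod_lt n m.succ_pos, (Nat.mod_add_div n (m + 1)).symm⟩
  calc ‖a ^ (s + (m + 1) * q)‖ ≤ ‖a ^ s‖ * ‖a ^ (m + 1)‖ ^ q := norm_pow_add_mul_le a _ _ _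
    _ ≤ ‖a ^ s‖ * (μ ^ (m + 1)) ^ q := by gcongr
    _ = ‖a ^ s‖ / μ ^ s * μ ^ (s + (m + 1) * q) := by
        rw [pow_add μ s, pow_mul]
        field_simp
    _ ≤ _ := by
        gcongr
        exact Finset.single_le_sum (f := fun s => ‖a ^ s‖ / μ ^ s) (fun _ _ => by positivity)
          (Finset.mem_range.2 hs)

lemma spectralRadius_le_ofReal_normGrowthRate (𝕜 : Type*) [NormedField 𝕜] [NormedAlgebra 𝕜 A]
    [CompleteSpace A] [NormOneClass A] (a : A) :
    spectralRadius 𝕜 a ≤ ENNReal.ofReal (normGrowthRate a) := by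
  have hfin : spectralRadius 𝕜 a ≠ ⊤ :=
    ne_top_of_le_ne_top ENNReal.coe_ne_top (spectrum.spectralRadius_le_nnnorm a)
  rw [ENNReal.le_ofReal_iff_toReal_le hfin (normGrowthRate_nonneg a)]
  refine le_ciInf fun n => ?_
  have h := spectrum.spectralRadius_le_pow_nnnorm_pow_one_div 𝕜 a n
  rw [nnnorm_one, ENNReal.coe_one, ENNReal.one_rpow, mul_one] at h
  have h' := ENNReal.toReal_mono
    (ENNReal.rpow_ne_top_of_nonneg (by positivity) ENNReal.coe_ne_top) h
  rwa [← ENNReal.toReal_rpow, ENNReal.coe_toReal, coe_nnnorm, one_div] at h'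

lemma spectralRadius_eq_ofReal_normGrowthRate [NormedAlgebra ℝ A] [CompleteSpace A]
    [NormOneClass A] {a : A} (h : normGrowthRate a ∈ spectrum ℝ a) :
    spectralRadius ℝ a = ENNReal.ofReal (normGrowthRate a) := by
  refine le_antisymm (spectralRadius_le_ofReal_normGrowthRate ℝ a) ?_
  rw [ENNReal.ofReal_eq_coe_nnreal (normGrowthRate_nonneg a), ← Real.nnnorm_of_nonneg]
  exact le_iSup₂ (f := fun k (_ : k ∈ spectrum ℝ a) => (‖k‖₊ : ENNReal)) _ h

end GrowthRate

section Resolvent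

variable {E : Type*} [NormedAddCommGroup E] [NormedSpace ℝ E]

lemma summable_resolvent_series [CompleteSpace E] (T : E →L[ℝ] E) (u : E) {l : ℝ}
    (hl : normGrowthRate T < l) : Summable fun n : ℕ => (l ^ (n + 1))⁻¹ • (T ^ n) u := by
  have hl0 : 0 < l := (normGrowthRate_nonneg T).trans_lt hl
  obtain ⟨μ, hrμ, hμl⟩ := exists_between hl
  have hμ0 : 0 ≤ μ := (normGrowthRate_nonneg T).trans hrμ.le
  obtain ⟨B, hB⟩ := exists_norm_pow_le_of_normGrowthRate_lt hrμ
  refine Summable.of_norm_bounded ((summable_geometric_of_lt_one (div_nonneg hμ0 hl0.le)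
    ((div_lt_one hl0).2 hμl)).mul_left (B * ‖u‖ / l)) fun n => ?_
  calc ‖(l ^ (n + 1))⁻¹ • (T ^ n) u‖ = (l ^ (n + 1))⁻¹ * ‖(T ^ n) u‖ := by
        rw [norm_smul, norm_inv, norm_pow, Real.norm_of_nonneg hl0.le]
    _ ≤ (l ^ (n + 1))⁻¹ * (B * μ ^ n * ‖u‖) := by
        gcongr
        exact ((T ^ n).le_opNorm u).trans (by gcongr; exact hB n)
    _ = B * ‖u‖ / l * (μ / l) ^ n := by rw [div_pow, pow_succ, mul_inv]; ring

lemma HasSum.smul_sub_apply_eq_of_resolvent_series (T : E →L[ℝ] E) {u S : E} {l : ℝ}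
    (hl : l ≠ 0) (hS : HasSum (fun n : ℕ => (l ^ (n + 1))⁻¹ • (T ^ n) u) S) :
    l • S - T S = u := by
  have hshift : HasSum (fun n : ℕ => (l ^ (n + 1 + 1))⁻¹ • (T ^ (n + 1)) u) (S - l⁻¹ • u) := by
    have h := (hasSum_nat_add_iff' 1).2 hS
    simp only [Finset.range_one, Finset.sum_singleton, pow_zero] at h
    simpa using h
  have hTS : HasSum (fun n : ℕ => (l ^ (n + 1 + 1))⁻¹ • (T ^ (n + 1)) u) (l⁻¹ • T S) := by
    convert (T.hasSum hS).const_smul l⁻¹ using 2 with n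
    rw [pow_succ' T, mul_apply_eq_comp, map_smul, smul_smul, pow_succ l (n + 1), mul_inv,
      mul_comm]
  have hTS_eq : T S = l • S - u := by
    rw [← smul_inv_smul₀ hl (T S), hTS.unique hshift, smul_sub, smul_inv_smul₀ hl]
  rw [hTS_eq]
  abel

lemma div_sub_normGrowthRate_le_of_hasSum [Nontrivial E] {T : E →L[ℝ] E} {u S : E} {l c : ℝ}
    {f : StrongDual ℝ E} (hl : normGrowthRate T < l)
    (hS : HasSum (fun n : ℕ => (l ^ (n + 1))⁻¹ • (T ^ n) u) S) (hc : 0 ≤ c)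
    (hf : ∀ n, c * ‖T ^ n‖ ≤ f ((T ^ n) u)) : c / (l - normGrowthRate T) ≤ f S := by
  set r := normGrowthRate T
  have hr : 0 ≤ r := normGrowthRate_nonneg T
  have hl0 : 0 < l := hr.trans_lt hl
  have hgeom : HasSum (fun n : ℕ => c / l * (r / l) ^ n) (c / (l - r)) := by
    have h := (hasSum_geometric_of_lt_one (div_nonneg hr hl0.le)
      ((div_lt_one hl0).2 hl)).mul_left (c / l)
    rwa [one_sub_div hl0.ne', inv_div, div_mul_div_cancel₀ hl0.ne'] at h
  have hfS : HasSum (fun n : ℕ => (l ^ (n + 1))⁻¹ * f ((T ^ n) u)) (f S) := by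
    simpa only [map_smul, smul_eq_mul] using f.hasSum hS
  refine hasSum_le (fun n => ?_) hgeom hfS
  calc c / l * (r / l) ^ n = (l ^ (n + 1))⁻¹ * (c * r ^ n) := by
        rw [div_pow, pow_succ, mul_inv]; ring
    _ ≤ (l ^ (n + 1))⁻¹ * f ((T ^ n) u) := by
        gcongr
        exact (mul_le_mul_of_nonneg_left (normGrowthRate_pow_le T n) hc).trans (hf n)

lemma exists_eigenvector_of_tendsto_apply_sub_smul [FiniteDimensional ℝ E] {K : Set E}
    (hK : IsClosed K) (T : E →L[ℝ] E) {v : ℕ → E} {l : ℕ → ℝ} {r : ℝ} (hvK : ∀ k, v k ∈ K)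
    (hv : ∀ k, ‖v k‖ = 1) (hl : Tendsto l atTop (𝓝 r))
    (hT : Tendsto (fun k => T (v k) - l k • v k) atTop (𝓝 0)) :
    ∃ w ∈ K, w ≠ 0 ∧ T w = r • w := by
  obtain ⟨w, ⟨hwK, hw⟩, ψ, hψ, hvw⟩ :=
    ((isCompact_sphere (0 : E) 1).inter_left hK).tendsto_subseq (x := v)
      fun k => ⟨hvK k, by simpa using hv k⟩
  have hψ' := hψ.tendsto_atTop
  have hlim : Tendsto (fun k => T (v (ψ k)) - l (ψ k) • v (ψ k)) atTop (𝓝 (T w - r • w)) :=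
    ((T.continuous.tendsto w).comp hvw).sub ((hl.comp hψ').smul hvw)
  refine ⟨w, hwK, ne_zero_of_mem_unit_sphere ⟨w, hw⟩, ?_⟩
  exact sub_eq_zero.1 (tendsto_nhds_unique hlim (hT.comp hψ'))

lemma ProperCone.exists_eigenvector_of_tendsto_norm_atTop [FiniteDimensional ℝ E]
    (K : ProperCone ℝ E) (T : E →L[ℝ] E) {S : ℕ → E} {l : ℕ → ℝ} {r : ℝ} {u : E}
    (hSK : ∀ k, S k ∈ K) (hS0 : ∀ k, S k ≠ 0) (hS : ∀ k, l k • S k - T (S k) = u)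
    (hl : Tendsto l atTop (𝓝 r)) (hSnorm : Tendsto (fun k => ‖S k‖) atTop atTop) :
    ∃ w ∈ K, w ≠ 0 ∧ T w = r • w := by
  have happrox (k : ℕ) : T (‖S k‖⁻¹ • S k) - l k • ‖S k‖⁻¹ • S k = -(‖S k‖⁻¹ • u) := by
    rw [← hS k, map_smul]
    module
  refine exists_eigenvector_of_tendsto_apply_sub_smul K.isClosed T
    (v := fun k => ‖S k‖⁻¹ • S k) (fun k => K.smul_mem (hSK k) (by positivity))
    (fun k => norm_smul_inv_norm (hS0 k)) hl ?_
  have h := ((tendsto_inv_atTop_zero.comp hSnorm).smul_const u).neg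
  rw [zero_smul, neg_zero] at h
  exact h.congr fun k => (happrox k).symm

lemma ProperCone.exists_apply_eq_normGrowthRate_smul [FiniteDimensional ℝ E] [Nontrivial E]
    (K : ProperCone ℝ E) {T : E →L[ℝ] E} (hT : MapsTo T K K) {u : E} (hu : u ∈ K)
    {f : StrongDual ℝ E} {c : ℝ} (hc : 0 < c) (hf : ∀ n, c * ‖T ^ n‖ ≤ f ((T ^ n) u)) :
    ∃ w ∈ K, w ≠ 0 ∧ T w = normGrowthRate T • w := by
  set l : ℕ → ℝ := fun k => normGrowthRate T + ((k : ℝ) + 1)⁻¹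
  have hrl (k : ℕ) : normGrowthRate T < l k := lt_add_of_pos_right _ (by positivity)
  have hl0 (k : ℕ) : 0 < l k := (normGrowthRate_nonneg T).trans_lt (hrl k)
  have hl : Tendsto l atTop (𝓝 (normGrowthRate T)) := by
    simpa [l] using tendsto_one_div_add_atTop_nhds_zero_nat.const_add (normGrowthRate T)
  choose S hS using fun k => summable_resolvent_series T u (hrl k)
  have hfS (k : ℕ) : c * ((k : ℝ) + 1) ≤ f (S k) := by
    have h := div_sub_normGrowthRate_le_of_hasSum (hrl k) (hS k) hc.le hf
    rwa [add_sub_cancel_left, div_inv_eq_mul] at h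
  have hfS_tendsto : Tendsto (fun k => f (S k)) atTop atTop :=
    tendsto_atTop_mono hfS
      ((tendsto_atTop_add_const_right _ 1 tendsto_natCast_atTop_atTop).const_mul_atTop hc)
  refine K.exists_eigenvector_of_tendsto_norm_atTop T
    (fun k => K.mem_of_hasSum (hS k) fun n =>
      K.smul_mem (T.mapsTo_pow hT n hu) (by have := hl0 k; positivity))
    (fun k hk => ?_) (fun k => (hS k).smul_sub_apply_eq_of_resolvent_series T (hl0 k).ne') hl
    (tendsto_norm_atTop_of_tendsto_apply f hfS_tendsto)
  have h := hfS k
  rw [hk, map_zero] at h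
  exact h.not_gt (by positivity)

end Resolvent

theorem perron_frobenius_cone
    (E : Type*) [NormedAddCommGroup E] [NormedSpace ℝ E]
    [FiniteDimensional ℝ E] [Nontrivial E]
    (T : E →L[ℝ] E) (C : Set E)
    (hclosed : IsClosed C) (hconv : Convex ℝ C)
    (hcone : ∀ r : ℝ, 0 ≤ r → ∀ x ∈ C, r • x ∈ C)
    (hspan : Submodule.span ℝ C = ⊤)
    (hsalient : C ∩ (-C) ⊆ {0})
    (hT : ∀ x ∈ C, T x ∈ C) :
    ∃ v ∈ C, v ≠ 0 ∧ T v = (spectralRadius ℝ T).toReal • v := by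
  have hne : C.Nonempty := by
    refine nonempty_iff_ne_empty.2 fun h => ?_
    rw [h, Submodule.span_empty] at hspan
    exact bot_ne_top hspan
  obtain ⟨K, rfl⟩ := ProperCone.exists_coe_eq hne hclosed hconv hcone
  have hK : (K : ConvexCone ℝ E).Salient := by
    rw [PointedCone.salient_iff_inter_neg_eq_singleton]
    exact hsalient.antisymm (by simp)
  obtain ⟨f, c, hc, hf⟩ := ProperCone.exists_mul_norm_le hK
  obtain ⟨u, ε, hε, hball⟩ := ProperCone.exists_closedBall_subset hspan
  have hdom (n : ℕ) : c * ε * ‖T ^ n‖ ≤ f ((T ^ n) u) :=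
    mul_mul_opNorm_le_of_closedBall hc hε fun y hy => hf _ (T.mapsTo_pow hT n (hball hy))
  obtain ⟨w, hwK, hw0, hTw⟩ := K.exists_apply_eq_normGrowthRate_smul hT
    (hball (Metric.mem_closedBall_self hε.le)) (by positivity) hdom
  rw [spectralRadius_eq_ofReal_normGrowthRate (T.mem_spectrum_of_apply_eq_smul hw0 hTw),
    ENNReal.toReal_ofReal (normGrowthRate_nonneg T)]
  exact ⟨w, hwK, hw0, hTw⟩
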